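/- arXiv:1210.0417 — 2 statements merged into one kernel-verified Lean document; each statement's English description precedes it below -/
import Mathlib

section
/- If $S$ and $T$ are bounded selfadjoint invertible operators on a real separable Hilbert space $H$ such that $S - T$ is compact, then the intersection $E_-(S) \cap E_+(T)$ of the negative spectral subspace of $S$ with the positive spectral subspace of $T$ is finite-dimensional. -/
open Set

/-- `E` is the negative spectral subspace of the bounded selfadjoint operator `L`:
a closed `L`-invariant subspace on which `L` is negative definite and on whose
orthogonal complement `L` is nonnegative. For selfadjoint invertible `L` this
characterises the range of the spectral projection associated to `(-∞,0)`. -/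
def IsNegSpectralSub {H : Type*} [NormedAddCommGroup H] [InnerProductSpace ℝ H]
    (L : H →L[ℝ] H) (E : Submodule ℝ H) : Prop :=
  IsClosed (E : Set H) ∧ (∀ u ∈ E, L u ∈ E) ∧
    (∀ u ∈ E, u ≠ 0 → inner (𝕜 := ℝ) (L u) u < 0) ∧
    (∀ u ∈ Eᗮ, 0 ≤ inner (𝕜 := ℝ) (L u) u)

/-- The positive spectral subspace of `L` is the negative spectral subspace of `-L`. -/
def IsPosSpectralSub {H : Type*} [NormedAddCommGroup H] [InnerProductSpace ℝ H]
    (L : H →L[ℝ] H) (E : Submodule ℝ H) : Prop :=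
  IsNegSpectralSub (-L) E

/-!
Cauchy–Schwarz for the nonnegative form `⟪-S ·, ·⟫` on the `S`-invariant subspace `E₋(S)`,
applied to `u` and `S u`, gives `‖S u‖² ≤ ‖S‖ ⟪-S u, u⟫`; with `‖u‖ ≤ ‖S⁻¹‖ ‖S u‖` this makes
`⟪-S u, u⟫ ≥ c ‖u‖²` on `E₋(S)`, and likewise `⟪T u, u⟫ ≥ c' ‖u‖²` on `E₊(T)`. So the compact
operator `T - S` is coercive, hence bounded below, on `E₋(S) ∩ E₊(T)`. A compact operator that is
bounded below maps the unit ball onto a totally bounded set and pulls total boundedness back, so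
the unit ball of `E₋(S) ∩ E₊(T)` is totally bounded and Riesz's theorem applies.
-/

open scoped InnerProductSpace

theorem FiniteDimensional.of_isCompactOperator_of_antilipschitz {𝕜 E F : Type*}
    [NontriviallyNormedField 𝕜] [CompleteSpace 𝕜] [NormedAddCommGroup E] [NormedSpace 𝕜 E]
    [NormedAddCommGroup F] [NormedSpace 𝕜 F] {f : E →L[𝕜] F} (hf : IsCompactOperator f)
    {K : NNReal} (hK : AntilipschitzWith K f) : FiniteDimensional 𝕜 E :=
  .of_totallyBounded_nhds_zero 𝕜 (Metric.closedBall_mem_nhds 0 one_pos) <|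
    (totallyBounded_image_iff (hK.isUniformInducing f.uniformContinuous)).mp <|
      (hf.isCompact_closure_image_closedBall 1).totallyBounded.subset subset_closure

section

variable {H : Type*} [NormedAddCommGroup H] [InnerProductSpace ℝ H] {E : Submodule ℝ H}

theorem LinearMap.IsSymmetric.inner_map_sq_le {A : H →ₗ[ℝ] H} (hA : A.IsSymmetric)
    (hE : ∀ u ∈ E, 0 ≤ ⟪A u, u⟫_ℝ) {x y : H} (hx : x ∈ E) (hy : y ∈ E) :
    ⟪A x, y⟫_ℝ ^ 2 ≤ ⟪A x, x⟫_ℝ * ⟪A y, y⟫_ℝ := by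
  have hquad (t : ℝ) : 0 ≤ ⟪A y, y⟫_ℝ * (t * t) + 2 * ⟪A x, y⟫_ℝ * t + ⟪A x, x⟫_ℝ := by
    have h := hE _ (E.add_mem hx (E.smul_mem t hy))
    have hyx : ⟪A y, x⟫_ℝ = ⟪A x, y⟫_ℝ := by rw [hA, real_inner_comm]
    simp only [map_add, map_smul, inner_add_left, inner_add_right, real_inner_smul_left,
      real_inner_smul_right, hyx] at h
    linarith
  have := discrim_le_zero hquad
  rw [discrim] at this
  linarith

namespace ContinuousLinearMap

variable {A : H →L[ℝ] H}

theorem norm_map_sq_le_opNorm_mul_inner (hA : (A : H →ₗ[ℝ] H).IsSymmetric)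
    (hAE : ∀ u ∈ E, A u ∈ E) (hE : ∀ u ∈ E, 0 ≤ ⟪A u, u⟫_ℝ) {u : H} (hu : u ∈ E) :
    ‖A u‖ ^ 2 ≤ ‖A‖ * ⟪A u, u⟫_ℝ := by
  have hcs : ‖A u‖ ^ 2 * ‖A u‖ ^ 2 ≤ ⟪A u, u⟫_ℝ * (‖A‖ * ‖A u‖ ^ 2) := calc
    ‖A u‖ ^ 2 * ‖A u‖ ^ 2 = ⟪A u, A u⟫_ℝ ^ 2 := by rw [real_inner_self_eq_norm_sq]; ring
    _ ≤ ⟪A u, u⟫_ℝ * ⟪A (A u), A u⟫_ℝ := hA.inner_map_sq_le hE hu (hAE u hu)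
    _ ≤ ⟪A u, u⟫_ℝ * (‖A‖ * ‖A u‖ ^ 2) := by
      gcongr
      · exact hE u hu
      · calc ⟪A (A u), A u⟫_ℝ ≤ ‖A (A u)‖ * ‖A u‖ := real_inner_le_norm _ _
          _ ≤ ‖A‖ * ‖A u‖ * ‖A u‖ := by gcongr; exact A.le_opNorm _
          _ = ‖A‖ * ‖A u‖ ^ 2 := by ring
  rcases (sq_nonneg ‖A u‖).eq_or_lt with h0 | hpos
  · rw [← h0]
    exact mul_nonneg (norm_nonneg A) (hE u hu)
  · nlinarith

theorem exists_pos_mul_norm_sq_le_inner (hA : (A : H →ₗ[ℝ] H).IsSymmetric) (hunit : IsUnit A)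
    (hAE : ∀ u ∈ E, A u ∈ E) (hE : ∀ u ∈ E, 0 ≤ ⟪A u, u⟫_ℝ) :
    ∃ c > 0, ∀ u ∈ E, c * ‖u‖ ^ 2 ≤ ⟪A u, u⟫_ℝ := by
  set e := ContinuousLinearEquiv.ofUnit hunit.unit
  set K := ‖(e.symm : H →L[ℝ] H)‖
  -- the `+ 1` keeps `c` positive when `K ^ 2 * ‖A‖ = 0` (as `0⁻¹ = 0`), e.g. for trivial `H`
  refine ⟨(K ^ 2 * ‖A‖ + 1)⁻¹, by positivity, fun u hu => ?_⟩
  have hbelow : ‖u‖ ≤ K * ‖A u‖ := (e : H →L[ℝ] H).bound_of_antilipschitz e.antilipschitz u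
  have hnonneg := hE u hu
  rw [inv_mul_le_iff₀ (by positivity)]
  calc ‖u‖ ^ 2 ≤ K ^ 2 * ‖A u‖ ^ 2 := by
        rw [← mul_pow]; gcongr
    _ ≤ K ^ 2 * (‖A‖ * ⟪A u, u⟫_ℝ) := by
        gcongr; exact norm_map_sq_le_opNorm_mul_inner hA hAE hE hu
    _ ≤ (K ^ 2 * ‖A‖ + 1) * ⟪A u, u⟫_ℝ := by nlinarith

end ContinuousLinearMap

theorem IsCompactOperator.finiteDimensional_of_forall_le_inner {K : H →L[ℝ] H}
    (hK : IsCompactOperator K) {c : ℝ} (hc : 0 < c) (V : Submodule ℝ H)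
    (hV : ∀ u ∈ V, c * ‖u‖ ^ 2 ≤ ⟪K u, u⟫_ℝ) : FiniteDimensional ℝ V := by
  have hbelow (u : V) : ‖u‖ ≤ c⁻¹ * ‖K u‖ := by
    rw [inv_mul_eq_div, le_div_iff₀ hc]
    rcases (norm_nonneg u).eq_or_lt with h0 | hpos
    · rw [← h0, zero_mul]; positivity
    · have : c * ‖u‖ * ‖u‖ ≤ ‖K u‖ * ‖u‖ :=
        calc c * ‖u‖ * ‖u‖ = c * ‖(u : H)‖ ^ 2 := by simp [sq, mul_assoc]
          _ ≤ ⟪K u, u⟫_ℝ := hV u u.2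
          _ ≤ ‖K u‖ * ‖u‖ := real_inner_le_norm _ _
      nlinarith
  refine FiniteDimensional.of_isCompactOperator_of_antilipschitz (hK.comp_clm V.subtypeL)
    ((K.comp V.subtypeL).antilipschitz_of_bound (K := c.toNNReal⁻¹) fun u => ?_)
  simpa [Real.coe_toNNReal _ hc.le] using hbelow u

theorem IsNegSpectralSub.exists_pos_mul_norm_sq_le_inner [CompleteSpace H] {L : H →L[ℝ] H}
    (hE : IsNegSpectralSub L E) (hL : IsSelfAdjoint L) (hunit : IsUnit L) :
    ∃ c > 0, ∀ u ∈ E, c * ‖u‖ ^ 2 ≤ ⟪(-L) u, u⟫_ℝ := by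
  obtain ⟨-, hLE, hneg, -⟩ := hE
  refine (-L).exists_pos_mul_norm_sq_le_inner hL.neg.isSymmetric hunit.neg
    (fun u hu => by simpa using hLE u hu) fun u hu => ?_
  rcases eq_or_ne u 0 with rfl | hu0
  · simp
  · simpa [inner_neg_left] using (hneg u hu hu0).le

end

theorem finiteDimensional_inf_negSpectral_posSpectral_general
    {H : Type*} [NormedAddCommGroup H] [InnerProductSpace ℝ H] [CompleteSpace H]
    (S T : H →L[ℝ] H) (hS : IsSelfAdjoint S) (hT : IsSelfAdjoint T)
    (hSinv : IsUnit S) (hTinv : IsUnit T)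
    (hcpt : IsCompactOperator (S - T))
    (Em Ep : Submodule ℝ H)
    (hEm : IsNegSpectralSub S Em) (hEp : IsPosSpectralSub T Ep) :
    FiniteDimensional ℝ ↥(Em ⊓ Ep) := by
  obtain ⟨cS, hcS, hS'⟩ := hEm.exists_pos_mul_norm_sq_le_inner hS hSinv
  obtain ⟨cT, hcT, hT'⟩ := IsNegSpectralSub.exists_pos_mul_norm_sq_le_inner hEp hT.neg hTinv.neg
  refine IsCompactOperator.finiteDimensional_of_forall_le_inner (K := T - S)
    (by simpa using hcpt.neg) (add_pos hcS hcT) _ fun u hu => ?_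
  have hsplit : ⟪(T - S) u, u⟫_ℝ = ⟪(-S) u, u⟫_ℝ + ⟪(-(-T)) u, u⟫_ℝ := by
    simp only [sub_apply, neg_apply, neg_neg, inner_sub_left, inner_neg_left]; ring
  rw [hsplit, add_mul]
  exact add_le_add (hS' u hu.1) (hT' u hu.2)

/-- If `S` and `T` are bounded selfadjoint invertible operators on a real separable
Hilbert space `H` such that `S - T` is compact, then `E₋(S) ∩ E₊(T)` is
finite-dimensional. -/
theorem finiteDimensional_inf_negSpectral_posSpectral
    {H : Type*} [NormedAddCommGroup H] [InnerProductSpace ℝ H] [CompleteSpace H]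
    [TopologicalSpace.SeparableSpace H]
    (S T : H →L[ℝ] H) (hS : IsSelfAdjoint S) (hT : IsSelfAdjoint T)
    (hSinv : IsUnit S) (hTinv : IsUnit T)
    (hcpt : IsCompactOperator (S - T))
    (Em Ep : Submodule ℝ H)
    (hEm : IsNegSpectralSub S Em) (hEp : IsPosSpectralSub T Ep) :
    FiniteDimensional ℝ ↥(Em ⊓ Ep) :=
  finiteDimensional_inf_negSpectral_posSpectral_general S T hS hT hSinv hTinv hcpt Em Ep hEm hEp
end

section
/- If $S$ and $T$ are bounded selfadjoint invertible operators on a Hilbert space $H$ with $S - T$ compact, then the difference $P_-(S) - P_-(T)$ of their negative spectral projections is a compact operator. -/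
open Set

/-- `P` is the negative spectral projection of `L`: an orthogonal projection
(selfadjoint idempotent) whose range is the negative spectral subspace of `L`. -/
def IsNegSpectralProj {H : Type*} [NormedAddCommGroup H] [InnerProductSpace ℝ H] [CompleteSpace H]
    (L P : H →L[ℝ] H) : Prop :=
  IsSelfAdjoint P ∧ P ∘L P = P ∧ IsNegSpectralSub L (LinearMap.range P.toLinearMap)

/-!
For a selfadjoint `L` with `‖L‖ < M` and `0 ∉ σ(L)`, put `K = M⁻¹ L`. Then `B = 1 - K²` is
positive with `‖B‖ < 1`, so the binomial series `(1 - B)^{-1/2} = ∑ₖ cₖ Bᵏ` (with `cₖ ≥ 0`)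
converges in norm to a positive operator `R`, and `U = K R` is the sign of `L`: `U² = 1`
and `⟪L U x, x⟫ > 0` for `x ≠ 0`. The negative spectral projection `P` commutes with `L`,
hence with `U`; comparing the signs of `⟪L x, x⟫` on the `±1`-eigenspaces of `U` with those
on `range P` and its complement gives `P = (1 - U) / 2`.

Compactness is then a matter of the series: if `S - T` is compact, so is `Bₛᵏ - Bₜᵏ` for
every `k`, hence so is the norm limit `Rₛ - Rₜ`, hence `Uₛ - Uₜ`, hence `P - Q`.
-/

open Finset Polynomial Filter
open scoped InnerProductSpace

/-- The coefficients of `(1 - x)^{-1/2} = ∑ₖ invSqrtCoeff k • xᵏ`. -/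
noncomputable def invSqrtCoeff (k : ℕ) : ℝ := (-1) ^ k * Ring.choose (-(1 / 2) : ℝ) k

theorem invSqrtCoeff_zero : invSqrtCoeff 0 = 1 := by simp [invSqrtCoeff]

theorem invSqrtCoeff_nonneg (k : ℕ) : 0 ≤ invSqrtCoeff k := by
  rw [invSqrtCoeff, Ring.choose_neg, Ring.choose_eq_smul, ← aeval_eq_smeval, aeval_def,
    ← eval_map, descPochhammer_map]
  have hpoch : 0 ≤ (descPochhammer ℝ k).eval (1 / 2 + (k : ℝ) - 1) :=
    descPochhammer_nonneg (by linarith)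
  simp only [Units.smul_def, zsmul_eq_mul, Int.cast_negOnePow_natCast, smul_eq_mul, ← mul_assoc,
    ← mul_pow, neg_one_mul, neg_neg, one_pow, one_mul]
  exact mul_nonneg (by positivity) hpoch

/-- `((1 - x)^{-1/2})² = (1 - x)⁻¹`, coefficientwise; this is Chu–Vandermonde at `-1/2 + -1/2`. -/
theorem sum_antidiagonal_invSqrtCoeff_mul (n : ℕ) :
    ∑ ij ∈ antidiagonal n, invSqrtCoeff ij.1 * invSqrtCoeff ij.2 = 1 := by
  have hneg : Ring.choose (-1 : ℝ) n = (-1) ^ n := by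
    simp [Ring.choose_neg, Ring.choose_natCast, Units.smul_def]
  have h := Ring.add_choose_eq n (Commute.all (-(1 / 2) : ℝ) (-(1 / 2)))
  rw [show -(1 / 2) + -(1 / 2) = (-1 : ℝ) by norm_num, hneg] at h
  calc ∑ ij ∈ antidiagonal n, invSqrtCoeff ij.1 * invSqrtCoeff ij.2
      = (-1) ^ n * ∑ ij ∈ antidiagonal n,
          Ring.choose (-(1 / 2) : ℝ) ij.1 * Ring.choose (-(1 / 2) : ℝ) ij.2 := by
        rw [mul_sum]
        refine sum_congr rfl fun ij hij => ?_
        rw [← mem_antidiagonal.mp hij, invSqrtCoeff, invSqrtCoeff, pow_add]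
        ring
    _ = 1 := by rw [← h, ← mul_pow]; norm_num

theorem invSqrtCoeff_le_one (k : ℕ) : invSqrtCoeff k ≤ 1 :=
  calc invSqrtCoeff k = invSqrtCoeff (0, k).1 * invSqrtCoeff (0, k).2 := by
        rw [invSqrtCoeff_zero, one_mul]
    _ ≤ ∑ ij ∈ antidiagonal k, invSqrtCoeff ij.1 * invSqrtCoeff ij.2 :=
        single_le_sum (fun ij _ => mul_nonneg (invSqrtCoeff_nonneg _) (invSqrtCoeff_nonneg _))
          (by simp)
    _ = 1 := sum_antidiagonal_invSqrtCoeff_mul k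

section NormedAlgebra

variable {A : Type*} [NormedRing A] [NormedAlgebra ℝ A]

noncomputable def invSqrtOneSub (a : A) : A := ∑' k, invSqrtCoeff k • a ^ k

theorem summable_norm_invSqrtCoeff_smul_pow {a : A} (ha : ‖a‖ < 1) :
    Summable fun k => ‖invSqrtCoeff k • a ^ k‖ := by
  refine (summable_norm_geometric_of_norm_lt_one ha).of_nonneg_of_le (fun _ => norm_nonneg _)
    fun k => ?_
  rw [norm_smul, Real.norm_of_nonneg (invSqrtCoeff_nonneg k)]
  exact mul_le_of_le_one_left (norm_nonneg _) (invSqrtCoeff_le_one k)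

theorem invSqrtOneSub_mul_self_mul_one_sub [CompleteSpace A] {a : A} (ha : ‖a‖ < 1) :
    invSqrtOneSub a * invSqrtOneSub a * (1 - a) = 1 := by
  have hs := summable_norm_invSqrtCoeff_smul_pow ha
  rw [invSqrtOneSub, tsum_mul_tsum_eq_tsum_sum_antidiagonal_of_summable_norm hs hs]
  refine (congrArg (· * (1 - a)) (tsum_congr fun n => ?_)).trans (geom_series_mul_neg a ha)
  calc ∑ ij ∈ antidiagonal n, invSqrtCoeff ij.1 • a ^ ij.1 * invSqrtCoeff ij.2 • a ^ ij.2
      = ∑ ij ∈ antidiagonal n, (invSqrtCoeff ij.1 * invSqrtCoeff ij.2) • a ^ n := by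
        refine sum_congr rfl fun ij hij => ?_
        rw [smul_mul_smul_comm, ← pow_add, mem_antidiagonal.mp hij]
    _ = a ^ n := by rw [← sum_smul, sum_antidiagonal_invSqrtCoeff_mul, one_smul]

theorem Commute.invSqrtOneSub_right {a b : A} (h : Commute b a) :
    Commute b (invSqrtOneSub a) :=
  Commute.tsum_right b fun k => (h.pow_right k).smul_right _

theorem Commute.invSqrtOneSub_one_sub_mul_self_right {K X : A} (h : Commute X K) :
    Commute X (invSqrtOneSub (1 - K * K)) :=
  ((Commute.one_right X).sub_right (h.mul_right h)).invSqrtOneSub_right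

/-- `K (K²)^{-1/2}`, the sign of `K` when `‖1 - K²‖ < 1`. -/
noncomputable def opSign (K : A) : A := K * invSqrtOneSub (1 - K * K)

theorem Commute.opSign_right {K X : A} (h : Commute X K) : Commute X (opSign K) :=
  h.mul_right h.invSqrtOneSub_one_sub_mul_self_right

theorem opSign_mul_self [CompleteSpace A] {K : A} (hK : ‖1 - K * K‖ < 1) :
    opSign K * opSign K = 1 := by
  set R := invSqrtOneSub (1 - K * K)
  have hR : R * R * (K * K) = 1 := by
    simpa only [sub_sub_cancel] using invSqrtOneSub_mul_self_mul_one_sub hK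
  have hKR : Commute K R := (Commute.refl K).invSqrtOneSub_one_sub_mul_self_right
  calc opSign K * opSign K = K * K * (R * R) := hKR.symm.mul_mul_mul_comm K R
    _ = 1 := by rw [((hKR.mul_left hKR).mul_right (hKR.mul_left hKR)).eq, hR]

end NormedAlgebra

theorem norm_inv_smul_le_one_of_norm_lt {F : Type*} [SeminormedAddCommGroup F] [NormedSpace ℝ F]
    {v : F} {M : ℝ} (hM : ‖v‖ < M) : ‖M⁻¹ • v‖ ≤ 1 := by
  have hM0 : 0 < M := (norm_nonneg v).trans_lt hM
  rw [norm_smul, norm_inv, Real.norm_of_nonneg hM0.le]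
  exact (inv_mul_le_one₀ hM0).mpr hM.le

section BanachSpace

variable {E : Type*} [NormedAddCommGroup E] [NormedSpace ℝ E]

theorem IsUnit.exists_norm_le_mul_norm_apply {L : E →L[ℝ] E} (hL : IsUnit L) :
    ∃ C, ∀ x, ‖x‖ ≤ C * ‖L x‖ := by
  obtain ⟨u, rfl⟩ := hL
  refine ⟨‖(↑u⁻¹ : E →L[ℝ] E)‖, fun x => ?_⟩
  calc ‖x‖ = ‖(↑u⁻¹ : E →L[ℝ] E) ((u : E →L[ℝ] E) x)‖ := by
        rw [← mul_apply_eq_comp, u.inv_mul, one_apply_eq_self]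
    _ ≤ _ := ContinuousLinearMap.le_opNorm _ _

namespace IsCompactOperator

theorem mul_sub_mul {a b c d : E →L[ℝ] E} (hab : IsCompactOperator (a - b))
    (hcd : IsCompactOperator (c - d)) : IsCompactOperator (a * c - b * d) := by
  rw [show a * c - b * d = (a - b) * c + b * (c - d) by noncomm_ring]
  exact (hab.comp_clm c).add (hcd.clm_comp b)

theorem pow_sub_pow {a b : E →L[ℝ] E} (h : IsCompactOperator (a - b)) (k : ℕ) :
    IsCompactOperator (a ^ k - b ^ k) := by
  induction k with
  | zero => simpa using isCompactOperator_zero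
  | succ k ih => simpa only [pow_succ'] using h.mul_sub_mul ih

theorem invSqrtOneSub_sub [CompleteSpace E] {a b : E →L[ℝ] E} (ha : ‖a‖ < 1) (hb : ‖b‖ < 1)
    (h : IsCompactOperator (a - b)) :
    IsCompactOperator (invSqrtOneSub a - invSqrtOneSub b) := by
  have hsum : HasSum (fun k => invSqrtCoeff k • (a ^ k - b ^ k))
      (invSqrtOneSub a - invSqrtOneSub b) := by
    simpa only [invSqrtOneSub, smul_sub] using
      (summable_norm_invSqrtCoeff_smul_pow ha).of_norm.hasSum.sub
        (summable_norm_invSqrtCoeff_smul_pow hb).of_norm.hasSum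
  refine isCompactOperator_of_tendsto hsum.tendsto_sum_nat (Eventually.of_forall fun n => ?_)
  exact sum_induction _ (fun T : E →L[ℝ] E => IsCompactOperator T)
    (fun _ _ => IsCompactOperator.add) (by simpa using isCompactOperator_zero)
    fun k _ => (h.pow_sub_pow k).smul _

theorem opSign_sub [CompleteSpace E] {a b : E →L[ℝ] E} (ha : ‖1 - a * a‖ < 1)
    (hb : ‖1 - b * b‖ < 1) (h : IsCompactOperator (a - b)) :
    IsCompactOperator (opSign a - opSign b) := by
  have h' : IsCompactOperator (b - a) := by rw [← neg_sub]; exact h.neg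
  refine h.mul_sub_mul (invSqrtOneSub_sub ha hb ?_)
  rw [sub_sub_sub_cancel_left]
  exact h'.mul_sub_mul h'

end IsCompactOperator

end BanachSpace

section HilbertSpace

variable {H : Type*} [NormedAddCommGroup H] [InnerProductSpace ℝ H] [CompleteSpace H]

theorem IsSelfAdjoint.inner_apply_eq {T : H →L[ℝ] H} (hT : IsSelfAdjoint T) (x y : H) :
    ⟪T x, y⟫_ℝ = ⟪x, T y⟫_ℝ :=
  hT.isSymmetric x y

namespace ContinuousLinearMap.IsPositive

variable {B : H →L[ℝ] H}

theorem inner_pow_apply_self_nonneg (hB : B.IsPositive) (k : ℕ) (x : H) :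
    0 ≤ ⟪(B ^ k) x, x⟫_ℝ := by
  obtain ⟨m, hm⟩ := k.even_or_odd'
  have hBm := (hB.isSelfAdjoint.pow m).inner_apply_eq
  rcases hm with rfl | rfl
  · rw [two_mul, pow_add, mul_apply_eq_comp, hBm]
    exact real_inner_self_nonneg
  · rw [show 2 * m + 1 = m + (1 + m) by ring, pow_add, pow_add, pow_one,
      mul_apply_eq_comp, mul_apply_eq_comp, hBm]
    exact hB.inner_nonneg_left _

theorem norm_sq_le_inner_invSqrtOneSub (hB : B.IsPositive) (hB1 : ‖B‖ < 1) (x : H) :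
    ‖x‖ ^ 2 ≤ ⟪invSqrtOneSub B x, x⟫_ℝ := by
  have hsum := (summable_norm_invSqrtCoeff_smul_pow hB1).of_norm.hasSum.mapL
    ((innerSL ℝ x).comp (ContinuousLinearMap.apply ℝ H x))
  simp only [comp_apply, apply_apply, smul_apply, innerSL_apply_apply, inner_smul_right] at hsum
  simpa [invSqrtOneSub, invSqrtCoeff_zero, real_inner_comm, real_inner_self_eq_norm_sq] using
    le_hasSum hsum 0 fun k _ => mul_nonneg (invSqrtCoeff_nonneg k) (by
      rw [real_inner_comm]; exact hB.inner_pow_apply_self_nonneg k x)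

end ContinuousLinearMap.IsPositive

namespace IsSelfAdjoint

variable {K : H →L[ℝ] H}

theorem inner_one_sub_mul_self_apply (hK : IsSelfAdjoint K) (x : H) :
    ⟪(1 - K * K) x, x⟫_ℝ = ‖x‖ ^ 2 - ‖K x‖ ^ 2 := by
  rw [sub_apply, mul_apply_eq_comp, inner_sub_left, hK.inner_apply_eq, one_apply_eq_self,
    real_inner_self_eq_norm_sq, real_inner_self_eq_norm_sq]

theorem isPositive_one_sub_mul_self (hK : IsSelfAdjoint K) (hK1 : ‖K‖ ≤ 1) :
    (1 - K * K).IsPositive := by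
  have hKK : IsSelfAdjoint (K * K) := by simpa [hK.star_eq] using IsSelfAdjoint.star_mul_self K
  refine (ContinuousLinearMap.isPositive_iff' _).mpr ⟨(IsSelfAdjoint.one _).sub hKK, fun x => ?_⟩
  rw [hK.inner_one_sub_mul_self_apply, sub_nonneg]
  exact pow_le_pow_left₀ (norm_nonneg _) (by simpa using K.le_of_opNorm_le hK1 x) 2

theorem norm_one_sub_mul_self_lt_one (hK : IsSelfAdjoint K) (hK1 : ‖K‖ ≤ 1) {C : ℝ}
    (hC : ∀ x, ‖x‖ ≤ C * ‖K x‖) : ‖1 - K * K‖ < 1 := by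
  have hr : C ^ 2 / (1 + C ^ 2) < 1 := by
    rw [div_lt_one (by positivity)]; linarith
  refine lt_of_le_of_lt ?_ hr
  have hpos := hK.isPositive_one_sub_mul_self hK1
  rw [(1 - K * K).norm_eq_iSup_rayleighQuotient hpos.isSymmetric]
  refine ciSup_le fun x => ?_
  have hx : ‖x‖ ^ 2 ≤ C ^ 2 * ‖K x‖ ^ 2 := by
    rw [← mul_pow]; exact pow_le_pow_left₀ (norm_nonneg _) (hC x) 2
  simp only [ContinuousLinearMap.rayleighQuotient, ContinuousLinearMap.reApplyInnerSelf_apply,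
    RCLike.re_to_real]
  rw [abs_div, abs_of_nonneg (hpos.inner_nonneg_left x), abs_of_nonneg (by positivity)]
  refine div_le_of_le_mul₀ (by positivity) (by positivity) ?_
  rw [hK.inner_one_sub_mul_self_apply, div_mul_eq_mul_div, le_div_iff₀ (by positivity)]
  nlinarith

theorem inner_opSign_pos (hK : IsSelfAdjoint K) (hK1 : ‖K‖ ≤ 1) (hB : ‖1 - K * K‖ < 1)
    {x : H} (hx : x ≠ 0) : 0 < ⟪K (opSign K x), x⟫_ℝ := by
  have hKx : K x ≠ 0 := by
    intro h
    have h1 : (1 - K * K) x = x := by simp [mul_apply_eq_comp, h]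
    have h2 := (1 - K * K).le_opNorm x
    rw [h1] at h2
    nlinarith [norm_pos_iff.mpr hx]
  calc 0 < ‖K x‖ ^ 2 := by positivity
    _ ≤ ⟪invSqrtOneSub (1 - K * K) (K x), K x⟫_ℝ :=
      (hK.isPositive_one_sub_mul_self hK1).norm_sq_le_inner_invSqrtOneSub hB _
    _ = ⟪K (opSign K x), x⟫_ℝ := by
      rw [hK.inner_apply_eq, opSign, ← mul_apply_eq_comp,
        (Commute.refl K).invSqrtOneSub_one_sub_mul_self_right.eq]

end IsSelfAdjoint

theorem IsSelfAdjoint.norm_one_sub_inv_smul_mul_self_lt_one {L : H →L[ℝ] H}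
    (hL : IsSelfAdjoint L) (hLu : IsUnit L) {M : ℝ} (hM : ‖L‖ < M) :
    ‖1 - (M⁻¹ • L) * (M⁻¹ • L)‖ < 1 := by
  have hM0 : 0 < M := (norm_nonneg L).trans_lt hM
  obtain ⟨C, hC⟩ := hLu.exists_norm_le_mul_norm_apply
  refine ((IsSelfAdjoint.all M⁻¹).smul hL).norm_one_sub_mul_self_lt_one
    (norm_inv_smul_le_one_of_norm_lt hM) (C := C * M) fun x => ?_
  calc ‖x‖ ≤ C * ‖L x‖ := hC x
    _ = C * M * ‖(M⁻¹ • L) x‖ := by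
      rw [smul_apply, norm_smul, norm_inv, Real.norm_of_nonneg hM0.le]
      field_simp

namespace IsNegSpectralProj

variable {L P : H →L[ℝ] H}

theorem commute (hL : IsSelfAdjoint L) (hP : IsNegSpectralProj L P) : Commute P L := by
  obtain ⟨hPsa, hPP, -, hinv, -⟩ := hP
  have hPLP : P * L * P = L * P := by
    ext x
    obtain ⟨y, hy⟩ := hinv (P x) ⟨x, rfl⟩
    simp only [mul_apply_eq_comp, ← hy]
    exact congrArg (· y) hPP
  calc P * L = star (L * P) := by rw [star_mul, hL.star_eq, hPsa.star_eq]
    _ = star (P * L * P) := by rw [hPLP]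
    _ = P * L * P := by rw [star_mul, star_mul, hL.star_eq, hPsa.star_eq, mul_assoc]
    _ = L * P := hPLP

theorem eq_half_one_sub_of_commute {U : H →L[ℝ] H} (hP : IsNegSpectralProj L P) (hUU : U * U = 1)
    (hPU : Commute P U) (hLU : ∀ x ≠ 0, 0 < ⟪L (U x), x⟫_ℝ) : P = (1 / 2 : ℝ) • (1 - U) := by
  obtain ⟨hPsa, hPP, -, -, hneg, hnonneg⟩ := hP
  have hPPx (x : H) : P (P x) = P x := congrArg (· x) hPP
  have hUUx (x : H) : U (U x) = x := by rw [← mul_apply_eq_comp, hUU, one_apply_eq_self]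
  have hPUx (x : H) : P (U x) = U (P x) := by rw [← mul_apply_eq_comp, hPU.eq, mul_apply_eq_comp]
  have hrange (x : H) : U (P x) = -P x := by
    set w := U (P x) + P x
    have hw : w = 0 := by
      by_contra hw
      have hUw : U w = w := by rw [map_add, hUUx, add_comm]
      have hLw_neg := hneg w ⟨U x + x, by simp [w, hPUx]⟩ hw
      have hLw_pos := hLU w hw
      rw [hUw] at hLw_pos
      linarith
    exact eq_neg_iff_add_eq_zero.mpr hw
  have hker (x : H) : U (x - P x) = x - P x := by
    set v := U (x - P x) - (x - P x)
    have hv : v = 0 := by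
      by_contra hv
      have hUv : U v = -v := by rw [map_sub, hUUx, neg_sub]
      have hPv : P v = 0 := by simp [v, hPUx, hPPx]
      have hLv_nonneg := hnonneg v (by rwa [hPsa.isSymmetric.orthogonal_range])
      have hLv_neg := hLU v hv
      rw [hUv, map_neg, inner_neg_left] at hLv_neg
      linarith
    exact sub_eq_zero.mp hv
  ext x
  have hx : U x = x - (2 : ℝ) • P x := by
    calc U x = U (P x) + U (x - P x) := by rw [← map_add, add_sub_cancel]
      _ = x - (2 : ℝ) • P x := by rw [hrange, hker]; module
  rw [smul_apply, sub_apply, one_apply_eq_self, hx]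
  module

theorem eq_half_one_sub_opSign (hL : IsSelfAdjoint L) (hLu : IsUnit L) {M : ℝ} (hM : ‖L‖ < M)
    (hP : IsNegSpectralProj L P) : P = (1 / 2 : ℝ) • (1 - opSign (M⁻¹ • L)) := by
  have hM0 : 0 < M := (norm_nonneg L).trans_lt hM
  have hK : IsSelfAdjoint (M⁻¹ • L) := (IsSelfAdjoint.all M⁻¹).smul hL
  have hB := hL.norm_one_sub_inv_smul_mul_self_lt_one hLu hM
  refine hP.eq_half_one_sub_of_commute (opSign_mul_self hB) ((hP.commute hL).smul_right _).opSign_right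
    fun x hx => ?_
  calc 0 < M * ⟪(M⁻¹ • L) (opSign (M⁻¹ • L) x), x⟫_ℝ :=
        mul_pos hM0 (hK.inner_opSign_pos (norm_inv_smul_le_one_of_norm_lt hM) hB hx)
    _ = ⟪L (opSign (M⁻¹ • L) x), x⟫_ℝ := by
        rw [smul_apply, real_inner_smul_left, mul_inv_cancel_left₀ hM0.ne']

end IsNegSpectralProj

end HilbertSpace

/-- If `S` and `T` are bounded selfadjoint invertible operators on a Hilbert space `H`
with `S - T` compact, then the difference `P₋(S) - P₋(T)` of their negative spectral
projections is a compact operator. -/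
theorem isCompactOperator_negSpectralProj_sub
    {H : Type*} [NormedAddCommGroup H] [InnerProductSpace ℝ H] [CompleteSpace H]
    (S T : H →L[ℝ] H) (hS : IsSelfAdjoint S) (hT : IsSelfAdjoint T)
    (hSinv : IsUnit S) (hTinv : IsUnit T)
    (hcpt : IsCompactOperator (S - T))
    (P Q : H →L[ℝ] H) (hP : IsNegSpectralProj S P) (hQ : IsNegSpectralProj T Q) :
    IsCompactOperator (P - Q) := by
  set M := ‖S‖ + ‖T‖ + 1
  have hSM : ‖S‖ < M := by linarith [norm_nonneg T]
  have hTM : ‖T‖ < M := by linarith [norm_nonneg S]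
  rw [hP.eq_half_one_sub_opSign hS hSinv hSM, hQ.eq_half_one_sub_opSign hT hTinv hTM,
    ← smul_sub, sub_sub_sub_cancel_left]
  refine IsCompactOperator.smul (IsCompactOperator.opSign_sub
    (hT.norm_one_sub_inv_smul_mul_self_lt_one hTinv hTM)
    (hS.norm_one_sub_inv_smul_mul_self_lt_one hSinv hSM) ?_) _
  rw [← smul_sub, ← neg_sub]
  exact hcpt.neg.smul _
end
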